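/- arXiv:2002.12453 — 2 statements merged into one kernel-verified Lean document; each statement's English description precedes it below -/
import Mathlib

section
/- Let I be a prime ideal of a CL-algebra L, and define the relation ρ on L by x ρ y if and only if x * ∼y ∈ I and y * ∼x ∈ I, where ∼x denotes x → 0. Then for all x, y in L, either x ρ (x ⊓ y) or y ρ (x ⊓ y); that is, the quotient L/I is linearly ordered. -/
/-!
Since `∼(a ⊓ b) ≤ ∼a ⊔ ∼b` and multiplication distributes over `⊔`, we get
`a * ∼(a ⊓ b) ≤ a * ∼a ⊔ a * ∼b ≤ 0 ⊔ ∼(a ⇨ b)`, while `(a ⊓ b) * ∼a ≤ a * ∼a ≤ 0`.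
Hence `a ρ (a ⊓ b)` as soon as `∼(a ⇨ b) ∈ I`, and primeness of `I` provides this
for `(a, b) = (x, y)` or `(a, b) = (y, x)`.
-/

/-- A CL-algebra: a lattice with least element `⊥`, a commutative monoid structure,
a residuated implication `⇨` and an involutive negation `∼x := x ⇨ 0`. -/
class CLAlgebra (L : Type*) extends Lattice L, OrderBot L, CommMonoid L, Zero L, HImp L where
  residuation : ∀ x y z : L, x * y ≤ z ↔ x ≤ y ⇨ z
  involution : ∀ x : L, ((x ⇨ (0 : L)) ⇨ (0 : L)) = x

namespace CLAlgebra

local notation:max "∼" x:max => x ⇨ 0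

variable {L : Type*} [CLAlgebra L]

theorem himp_mul_le (a b : L) : (a ⇨ b) * a ≤ b :=
  (residuation _ _ _).mpr le_rfl

instance : MulLeftMono L where
  elim c a b hab := by
    change c * a ≤ c * b
    rw [mul_comm c, mul_comm c]
    exact (residuation _ _ _).mpr (hab.trans ((residuation _ _ _).mp le_rfl))

theorem mul_neg_le_zero (a : L) : a * ∼a ≤ 0 := by
  rw [mul_comm]
  exact himp_mul_le a 0

theorem neg_le_neg {a b : L} (h : a ≤ b) : ∼b ≤ ∼a :=
  (residuation _ _ _).mp <| by
    rw [mul_comm]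
    exact (mul_le_mul_left h _).trans (mul_neg_le_zero b)

theorem neg_le_comm {a b : L} : ∼a ≤ b ↔ ∼b ≤ a :=
  ⟨fun h => involution a ▸ neg_le_neg h, fun h => involution b ▸ neg_le_neg h⟩

theorem neg_inf_le (a b : L) : ∼(a ⊓ b) ≤ ∼a ⊔ ∼b :=
  neg_le_comm.mpr <| le_inf (neg_le_comm.mp le_sup_left) (neg_le_comm.mp le_sup_right)

theorem mul_sup (a b c : L) : a * (b ⊔ c) = a * b ⊔ a * c := by
  refine le_antisymm ?_ (sup_le (mul_le_mul_right le_sup_left a) (mul_le_mul_right le_sup_right a))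
  rw [mul_comm]
  refine (residuation _ _ _).mpr (sup_le ?_ ?_) <;> refine (residuation _ _ _).mp ?_
  · rw [mul_comm]; exact le_sup_left
  · rw [mul_comm]; exact le_sup_right

theorem mul_neg_le_neg_himp (a b : L) : a * ∼b ≤ ∼(a ⇨ b) := by
  refine (residuation _ _ _).mp ?_
  have h : a * (a ⇨ b) ≤ ∼∼b := by
    rw [involution, mul_comm]
    exact himp_mul_le a b
  calc a * ∼b * (a ⇨ b) = a * (a ⇨ b) * ∼b := mul_right_comm _ _ _
    _ ≤ 0 := (residuation _ _ _).mpr h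

theorem mul_neg_inf_le (a b : L) : a * ∼(a ⊓ b) ≤ 0 ⊔ ∼(a ⇨ b) :=
  calc a * ∼(a ⊓ b) ≤ a * (∼a ⊔ ∼b) := mul_le_mul_right (neg_inf_le a b) a
    _ = a * ∼a ⊔ a * ∼b := mul_sup _ _ _
    _ ≤ 0 ⊔ ∼(a ⇨ b) := sup_le_sup (mul_neg_le_zero a) (mul_neg_le_neg_himp a b)

/-- The relation `ρ` of a subset `I`, whose classes form the quotient `L / I`. -/
def IdealRel (I : Set L) (x y : L) : Prop :=
  x * ∼y ∈ I ∧ y * ∼x ∈ I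

theorem idealRel_inf_of_neg_himp_mem {I : Set L} (h0 : (0 : L) ∈ I)
    (hsup : ∀ x y : L, x ∈ I → y ∈ I → x ⊔ y ∈ I)
    (hdown : ∀ x y : L, y ∈ I → x ≤ y → x ∈ I) {a b : L} (h : ∼(a ⇨ b) ∈ I) :
    IdealRel I a (a ⊓ b) :=
  ⟨hdown _ _ (hsup _ _ h0 h) (mul_neg_inf_le a b),
    hdown _ _ h0 ((mul_le_mul_left inf_le_left _).trans (mul_neg_le_zero a))⟩

end CLAlgebra

theorem prime_ideal_quotient_linear_general {L : Type*} [CLAlgebra L] (I : Set L)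
    -- `I` is an ideal of the CL-algebra `L`:
    (h0 : (0 : L) ∈ I)
    (hsup : ∀ x y : L, x ∈ I → y ∈ I → x ⊔ y ∈ I)
    (hdown : ∀ x y : L, y ∈ I → x ≤ y → x ∈ I)
    (hprime : ∀ x y : L, ((x ⇨ y) ⇨ (0 : L)) ∈ I ∨ ((y ⇨ x) ⇨ (0 : L)) ∈ I)
    (x y : L) :
    (x * ((x ⊓ y) ⇨ (0 : L)) ∈ I ∧ (x ⊓ y) * (x ⇨ (0 : L)) ∈ I) ∨
      (y * ((x ⊓ y) ⇨ (0 : L)) ∈ I ∧ (x ⊓ y) * (y ⇨ (0 : L)) ∈ I) := by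
  rcases hprime x y with hxy | hyx
  · exact Or.inl (CLAlgebra.idealRel_inf_of_neg_himp_mem h0 hsup hdown hxy)
  · right
    rw [inf_comm]
    exact CLAlgebra.idealRel_inf_of_neg_himp_mem h0 hsup hdown hyx

theorem prime_ideal_quotient_linear {L : Type*} [CLAlgebra L] (I : Set L)
    -- `I` is an ideal of the CL-algebra `L`:
    (h0 : (0 : L) ∈ I)
    (hadd : ∀ x y : L, x ∈ I → y ∈ I → (((x ⇨ (0 : L)) * (y ⇨ (0 : L))) ⇨ (0 : L)) ∈ I)
    (hsup : ∀ x y : L, x ∈ I → y ∈ I → x ⊔ y ∈ I)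
    (hdown : ∀ x y : L, y ∈ I → x ≤ y → x ∈ I)
    (hprime : ∀ x y : L, ((x ⇨ y) ⇨ (0 : L)) ∈ I ∨ ((y ⇨ x) ⇨ (0 : L)) ∈ I)
    (x y : L) :
    (x * ((x ⊓ y) ⇨ (0 : L)) ∈ I ∧ (x ⊓ y) * (x ⇨ (0 : L)) ∈ I) ∨
      (y * ((x ⊓ y) ⇨ (0 : L)) ∈ I ∧ (x ⊓ y) * (y ⇨ (0 : L)) ∈ I) :=
  prime_ideal_quotient_linear_general I h0 hsup hdown hprime x y
end

section
/- Let L be a CL-algebra in which every element is idempotent, i.e., x * x = x for all x in L, and let I be an ideal of L. Then I is an implicative ideal: for all x, y, z in L, if ∼(x → (y → z)) ∈ I and ∼(x → y) ∈ I, then ∼(x → z) ∈ I, where ∼x denotes x → 0. -/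
namespace CLAlgebra

variable {L : Type*} [CLAlgebra L]

instance : IsOrderedMonoid L where
  mul_le_mul_left _ _ hab _ :=
    (residuation _ _ _).2 (hab.trans ((residuation _ _ _).1 le_rfl))

theorem himp_le_himp_right {a b c : L} (h : a ≤ b) : b ⇨ c ≤ a ⇨ c :=
  (residuation _ _ _).1 ((mul_le_mul_right h _).trans (himp_mul_le b c))

/-- Modus ponens applied twice consumes the premise `x` twice, which idempotence of `x` pays for. -/
theorem himp_himp_mul_himp_le {x : L} (hx : x * x = x) (y z : L) :
    (x ⇨ (y ⇨ z)) * (x ⇨ y) ≤ x ⇨ z := by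
  rw [← residuation]
  calc (x ⇨ (y ⇨ z)) * (x ⇨ y) * x
      = ((x ⇨ (y ⇨ z)) * x) * ((x ⇨ y) * x) := by rw [mul_mul_mul_comm, hx]
    _ ≤ (y ⇨ z) * y := mul_le_mul' (himp_mul_le _ _) (himp_mul_le _ _)
    _ ≤ z := himp_mul_le y z

end CLAlgebra

theorem ideal_implicative_of_idem_general {L : Type*} [CLAlgebra L]
    (hidem : ∀ x : L, x * x = x) (I : Set L)
    -- `I` is an ideal of the CL-algebra `L`:
    (hadd : ∀ x y : L, x ∈ I → y ∈ I → (((x ⇨ (0 : L)) * (y ⇨ (0 : L))) ⇨ (0 : L)) ∈ I)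
    (hdown : ∀ x y : L, y ∈ I → x ≤ y → x ∈ I)
    (x y z : L)
    (h1 : ((x ⇨ (y ⇨ z)) ⇨ (0 : L)) ∈ I)
    (h2 : ((x ⇨ y) ⇨ (0 : L)) ∈ I) :
    ((x ⇨ z) ⇨ (0 : L)) ∈ I := by
  have hprod : ((x ⇨ (y ⇨ z)) * (x ⇨ y)) ⇨ (0 : L) ∈ I := by
    simpa only [CLAlgebra.involution] using hadd _ _ h1 h2
  exact hdown _ _ hprod
    (CLAlgebra.himp_le_himp_right (CLAlgebra.himp_himp_mul_himp_le (hidem x) y z))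

theorem ideal_implicative_of_idem {L : Type*} [CLAlgebra L]
    (hidem : ∀ x : L, x * x = x) (I : Set L)
    -- `I` is an ideal of the CL-algebra `L`:
    (h0 : (0 : L) ∈ I)
    (hadd : ∀ x y : L, x ∈ I → y ∈ I → (((x ⇨ (0 : L)) * (y ⇨ (0 : L))) ⇨ (0 : L)) ∈ I)
    (hsup : ∀ x y : L, x ∈ I → y ∈ I → x ⊔ y ∈ I)
    (hdown : ∀ x y : L, y ∈ I → x ≤ y → x ∈ I)
    (x y z : L)
    (h1 : ((x ⇨ (y ⇨ z)) ⇨ (0 : L)) ∈ I)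
    (h2 : ((x ⇨ y) ⇨ (0 : L)) ∈ I) :
    ((x ⇨ z) ⇨ (0 : L)) ∈ I :=
  ideal_implicative_of_idem_general hidem I hadd hdown x y z h1 h2
end
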